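/- (Theorem 1(i)) For every nonempty K ⊆ I, ξ̂_K^{(n)} converges almost surely to ξ_K as n → +∞. -/

import Mathlib

/-!
Each ingredient of `ξ̂_K` — the frequencies `p̂_m`, `p̂_{ℓ|m}`, the means `μ̂_m`, `μ̂_{ℓ,m}` and the
covariances `V̂_m` — is a ratio of two empirical averages of integrable functions of a single
observation, so by the strong law of large numbers it converges almost surely to its population
counterpart (for `V̂_m` after recentring at `μ_m`). Finally `ξ_K` depends continuously on these
quantities at the limit: `V ↦ Q_K(V)` is continuous wherever `A_K V A_K^*` is invertible, which
holds when `V` is positive definite.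
-/

open MeasureTheory Filter Finset ProbabilityTheory Matrix

noncomputable section

namespace ArxivStmt

variable {Ω : Type} [MeasurableSpace Ω]

/-- The rank-one operator `u ⊗ v : h ↦ ⟨u, h⟩ v` on `ℝ^p`, as a matrix. -/
def tensor {p : ℕ} (u v : Fin p → ℝ) : Matrix (Fin p) (Fin p) ℝ :=
  Matrix.of fun i j => v i * u j

/-- The coordinate projection `A_K : ℝ^p → ℝ^{card K}`, `x ↦ (x_i)_{i ∈ K}`, as a matrix. -/
def AK {p : ℕ} (K : Finset (Fin p)) : Matrix {x // x ∈ K} (Fin p) ℝ :=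
  Matrix.of fun k j => if (k : Fin p) = j then 1 else 0

/-- `Q_{K} = A_K^* (A_K V A_K^*)⁻¹ A_K`. -/
def QK {p : ℕ} (K : Finset (Fin p)) (V : Matrix (Fin p) (Fin p) ℝ) : Matrix (Fin p) (Fin p) ℝ :=
  (AK K)ᵀ * (AK K * V * (AK K)ᵀ)⁻¹ * AK K

/-- Squared euclidean norm on `ℝ^p`. -/
def esq {p : ℕ} (v : Fin p → ℝ) : ℝ := ∑ i, v i ^ 2

/-- `K_i = I ∖ {i}`. -/
def Kc {p : ℕ} (i : Fin p) : Finset (Fin p) := Finset.univ.erase i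

/-- `p_m = P(U = m)`. -/
def pU {M : ℕ} (P : Measure Ω) (U : Ω → Fin M) (m : Fin M) : ℝ := (P {ω | U ω = m}).toReal

/-- `P(Z = ℓ, U = m)`. -/
def pZU {M q : ℕ} (P : Measure Ω) (U : Ω → Fin M) (Z : Ω → Fin q) (l : Fin q) (m : Fin M) : ℝ :=
  (P {ω | Z ω = l ∧ U ω = m}).toReal

/-- `p_{ℓ|m} = P(Z = ℓ | U = m)`. -/
def pcond {M q : ℕ} (P : Measure Ω) (U : Ω → Fin M) (Z : Ω → Fin q) (l : Fin q) (m : Fin M) : ℝ :=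
  pZU P U Z l m / pU P U m

/-- `μ_m = E(1_{U=m} X) / p_m`. -/
def muU {p M : ℕ} (P : Measure Ω) (X : Ω → Fin p → ℝ) (U : Ω → Fin M) (m : Fin M) :
    Fin p → ℝ :=
  fun i => (pU P U m)⁻¹ * ∫ ω, (if U ω = m then X ω i else 0) ∂P

/-- `μ_{ℓ,m} = E(1_{Z=ℓ,U=m} X) / P(Z=ℓ,U=m)`. -/
def muZU {p M q : ℕ} (P : Measure Ω) (X : Ω → Fin p → ℝ) (U : Ω → Fin M) (Z : Ω → Fin q)
    (l : Fin q) (m : Fin M) : Fin p → ℝ :=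
  fun i => (pZU P U Z l m)⁻¹ * ∫ ω, (if Z ω = l ∧ U ω = m then X ω i else 0) ∂P

/-- `V_m = E(1_{U=m} (X - μ_m) ⊗ (X - μ_m)) / p_m`. -/
def VU {p M : ℕ} (P : Measure Ω) (X : Ω → Fin p → ℝ) (U : Ω → Fin M) (m : Fin M) :
    Matrix (Fin p) (Fin p) ℝ :=
  Matrix.of fun i j => (pU P U m)⁻¹ *
    ∫ ω, (if U ω = m then (X ω i - muU P X U m i) * (X ω j - muU P X U m j) else 0) ∂P

/-- `ξ_{K|m} = Σ_ℓ p_{ℓ|m}² ‖(I - V_m Q_{K|m})(μ_{ℓ,m} - μ_m)‖²`. -/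
def xiKm {p M q : ℕ} (P : Measure Ω) (X : Ω → Fin p → ℝ) (U : Ω → Fin M) (Z : Ω → Fin q)
    (K : Finset (Fin p)) (m : Fin M) : ℝ :=
  ∑ l : Fin q, pcond P U Z l m ^ 2 *
    esq ((1 - VU P X U m * QK K (VU P X U m)) *ᵥ (muZU P X U Z l m - muU P X U m))

/-- `ξ_K = Σ_m p_m² ξ_{K|m}`. -/
def xiK {p M q : ℕ} (P : Measure Ω) (X : Ω → Fin p → ℝ) (U : Ω → Fin M) (Z : Ω → Fin q)
    (K : Finset (Fin p)) : ℝ :=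
  ∑ m : Fin M, pU P U m ^ 2 * xiKm P X U Z K m

/-! Empirical (sample) quantities. -/

/-- `N̂_m^{(n)}`. -/
def NU {M : ℕ} (Us : ℕ → Ω → Fin M) (m : Fin M) (n : ℕ) (ω : Ω) : ℝ :=
  ∑ i ∈ Finset.range n, if Us i ω = m then 1 else 0

/-- `N̂_{ℓ,m}^{(n)}`. -/
def NZU {M q : ℕ} (Us : ℕ → Ω → Fin M) (Zs : ℕ → Ω → Fin q) (l : Fin q) (m : Fin M)
    (n : ℕ) (ω : Ω) : ℝ :=
  ∑ i ∈ Finset.range n, if Zs i ω = l ∧ Us i ω = m then 1 else 0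

/-- `p̂_m^{(n)} = N̂_m^{(n)} / n`. -/
def pUhat {M : ℕ} (Us : ℕ → Ω → Fin M) (m : Fin M) (n : ℕ) (ω : Ω) : ℝ :=
  NU Us m n ω / n

/-- `p̂_{ℓ|m}^{(n)} = N̂_{ℓ,m}^{(n)} / N̂_m^{(n)}`. -/
def pcondhat {M q : ℕ} (Us : ℕ → Ω → Fin M) (Zs : ℕ → Ω → Fin q) (l : Fin q) (m : Fin M)
    (n : ℕ) (ω : Ω) : ℝ :=
  NZU Us Zs l m n ω / NU Us m n ω

/-- `μ̂_m^{(n)}`. -/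
def muUhat {p M : ℕ} (Xs : ℕ → Ω → Fin p → ℝ) (Us : ℕ → Ω → Fin M) (m : Fin M)
    (n : ℕ) (ω : Ω) : Fin p → ℝ :=
  fun j => (NU Us m n ω)⁻¹ * ∑ i ∈ Finset.range n, if Us i ω = m then Xs i ω j else 0

/-- `μ̂_{ℓ,m}^{(n)}`. -/
def muZUhat {p M q : ℕ} (Xs : ℕ → Ω → Fin p → ℝ) (Us : ℕ → Ω → Fin M) (Zs : ℕ → Ω → Fin q)
    (l : Fin q) (m : Fin M) (n : ℕ) (ω : Ω) : Fin p → ℝ :=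
  fun j => (NZU Us Zs l m n ω)⁻¹ *
    ∑ i ∈ Finset.range n, if Zs i ω = l ∧ Us i ω = m then Xs i ω j else 0

/-- `V̂_m^{(n)}`. -/
def VUhat {p M : ℕ} (Xs : ℕ → Ω → Fin p → ℝ) (Us : ℕ → Ω → Fin M) (m : Fin M)
    (n : ℕ) (ω : Ω) : Matrix (Fin p) (Fin p) ℝ :=
  Matrix.of fun a b => (NU Us m n ω)⁻¹ * ∑ i ∈ Finset.range n,
    if Us i ω = m then
      (Xs i ω a - muUhat Xs Us m n ω a) * (Xs i ω b - muUhat Xs Us m n ω b) else 0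

/-- `ξ̂_{K|m}^{(n)}`. -/
def xiKmhat {p M q : ℕ} (Xs : ℕ → Ω → Fin p → ℝ) (Us : ℕ → Ω → Fin M) (Zs : ℕ → Ω → Fin q)
    (K : Finset (Fin p)) (m : Fin M) (n : ℕ) (ω : Ω) : ℝ :=
  ∑ l : Fin q, pcondhat Us Zs l m n ω ^ 2 *
    esq ((1 - VUhat Xs Us m n ω * QK K (VUhat Xs Us m n ω)) *ᵥ
      (muZUhat Xs Us Zs l m n ω - muUhat Xs Us m n ω))

/-- `ξ̂_K^{(n)}`. -/
def xiKhat {p M q : ℕ} (Xs : ℕ → Ω → Fin p → ℝ) (Us : ℕ → Ω → Fin M) (Zs : ℕ → Ω → Fin q)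
    (K : Finset (Fin p)) (n : ℕ) (ω : Ω) : ℝ :=
  ∑ m : Fin M, pUhat Us m n ω ^ 2 * xiKmhat Xs Us Zs K m n ω

/-- i.i.d. sample with the distribution of `(X, U, Z)`. -/
def IsIIDSample {p M q : ℕ} (P : Measure Ω) (X : Ω → Fin p → ℝ) (U : Ω → Fin M)
    (Z : Ω → Fin q) (Xs : ℕ → Ω → Fin p → ℝ) (Us : ℕ → Ω → Fin M) (Zs : ℕ → Ω → Fin q) :
    Prop :=
  (∀ i, Measurable fun ω => (Xs i ω, Us i ω, Zs i ω)) ∧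
  iIndepFun (fun i ω => (Xs i ω, Us i ω, Zs i ω)) P ∧
  ∀ i, IdentDistrib (fun ω => (Xs i ω, Us i ω, Zs i ω)) (fun ω => (X ω, U ω, Z ω)) P P


/-- i.i.d. sample with the distribution of `(X, U)`. -/
def IsIIDSample2 {p M : ℕ} (P : Measure Ω) (X : Ω → Fin p → ℝ) (U : Ω → Fin M)
    (Xs : ℕ → Ω → Fin p → ℝ) (Us : ℕ → Ω → Fin M) : Prop :=
  (∀ i, Measurable fun ω => (Xs i ω, Us i ω)) ∧
  iIndepFun (fun i ω => (Xs i ω, Us i ω)) P ∧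
  ∀ i, IdentDistrib (fun ω => (Xs i ω, Us i ω)) (fun ω => (X ω, U ω)) P P

open scoped Topology

lemma AK_mul_transpose {p : ℕ} (K : Finset (Fin p)) : AK K * (AK K)ᵀ = 1 := by
  ext k k'
  simp only [Matrix.mul_apply, AK, transpose_apply, of_apply, mul_ite, mul_one, mul_zero,
    Finset.sum_ite_eq, Finset.mem_univ, if_true, Matrix.one_apply, Subtype.ext_iff]

lemma posDef_AK_mul_mul_transpose {p : ℕ} (K : Finset (Fin p)) {V : Matrix (Fin p) (Fin p) ℝ}
    (hV : V.PosDef) : (AK K * V * (AK K)ᵀ).PosDef := by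
  have hinj : Function.Injective (AK K).vecMul :=
    Function.LeftInverse.injective (g := (· ᵥ* (AK K)ᵀ)) fun x => by
      simp [vecMul_vecMul, AK_mul_transpose]
  simpa [conjTranspose_eq_transpose_of_trivial] using hV.mul_mul_conjTranspose_same hinj

lemma continuousAt_QK {p : ℕ} (K : Finset (Fin p)) {V : Matrix (Fin p) (Fin p) ℝ}
    (hV : V.PosDef) : ContinuousAt (QK K) V := by
  have hdet := ((isUnit_iff_isUnit_det _).1 (posDef_AK_mul_mul_transpose K hV).isUnit).ne_zero
  have hinv : ContinuousAt Inv.inv (AK K * V * (AK K)ᵀ) :=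
    continuousAt_matrix_inv _ (by rw [Ring.inverse_eq_inv']; exact continuousAt_inv₀ hdet)
  unfold QK
  fun_prop (disch := exact hinv)

/-- `ξ_{K|m}` as a function of `(p_{ℓ|m})_ℓ`, `V_m`, `(μ_{ℓ,m})_ℓ` and `μ_m`. -/
def xiOfMoments {p q : ℕ} (K : Finset (Fin p)) (π : Fin q → ℝ) (V : Matrix (Fin p) (Fin p) ℝ)
    (ν : Fin q → Fin p → ℝ) (μ : Fin p → ℝ) : ℝ :=
  ∑ l, π l ^ 2 * esq ((1 - V * QK K V) *ᵥ (ν l - μ))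

lemma tendsto_xiOfMoments {p q : ℕ} (K : Finset (Fin p)) {ι : Type*} {F : Filter ι}
    {π : ι → Fin q → ℝ} {V : ι → Matrix (Fin p) (Fin p) ℝ} {ν : ι → Fin q → Fin p → ℝ}
    {μ : ι → Fin p → ℝ} {π₀ : Fin q → ℝ} {V₀ : Matrix (Fin p) (Fin p) ℝ}
    {ν₀ : Fin q → Fin p → ℝ} {μ₀ : Fin p → ℝ}
    (hπ : Tendsto π F (𝓝 π₀)) (hV : Tendsto V F (𝓝 V₀)) (hν : Tendsto ν F (𝓝 ν₀))
    (hμ : Tendsto μ F (𝓝 μ₀)) (hV₀ : V₀.PosDef) :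
    Tendsto (fun i => xiOfMoments K (π i) (V i) (ν i) (μ i)) F
      (𝓝 (xiOfMoments K π₀ V₀ ν₀ μ₀)) := by
  have hW : Tendsto (fun i => 1 - V i * QK K (V i)) F (𝓝 (1 - V₀ * QK K V₀)) :=
    tendsto_const_nhds.sub (hV.mul ((continuousAt_QK K hV₀).tendsto.comp hV))
  have hesq : Continuous (esq : (Fin p → ℝ) → ℝ) := by unfold esq; fun_prop
  refine tendsto_finsetSum _ fun l _ => ((tendsto_pi_nhds.1 hπ l).pow 2).mul ?_
  refine (hesq.tendsto _).comp ?_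
  exact (continuous_fst.matrix_mulVec continuous_snd).tendsto _ |>.comp
    (hW.prodMk_nhds ((tendsto_pi_nhds.1 hν l).sub hμ))

lemma tendsto_div_of_tendsto_div_natCast {c a : ℕ → ℝ} {C A : ℝ}
    (hc : Tendsto (fun n => c n / n) atTop (𝓝 C)) (ha : Tendsto (fun n => a n / n) atTop (𝓝 A))
    (hA : A ≠ 0) : Tendsto (fun n => c n / a n) atTop (𝓝 (C / A)) :=
  (hc.div ha hA).congr' <| (eventually_ne_atTop 0).mono fun _ hn =>
    div_div_div_cancel_right₀ (Nat.cast_ne_zero.2 hn) _ _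

lemma inv_mul_sum_ite_sub_mul_sub {ι : Type*} (s : Finset ι) (c : ι → Prop) [DecidablePred c]
    (x y : ι → ℝ) {N mx my : ℝ} (a b : ℝ) (hN : ∑ i ∈ s, (if c i then (1 : ℝ) else 0) = N)
    (hN0 : N ≠ 0) (hmx : mx = N⁻¹ * ∑ i ∈ s, if c i then x i else 0)
    (hmy : my = N⁻¹ * ∑ i ∈ s, if c i then y i else 0) :
    N⁻¹ * ∑ i ∈ s, (if c i then (x i - mx) * (y i - my) else 0)
      = N⁻¹ * ∑ i ∈ s, (if c i then (x i - a) * (y i - b) else 0) - (mx - a) * (my - b) := by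
  simp only [← Finset.sum_filter] at hN hmx hmy ⊢
  rw [Finset.sum_const, nsmul_one] at hN
  have hx : ∑ i ∈ s with c i, x i = N * mx := by rw [hmx, mul_inv_cancel_left₀ hN0]
  have hy : ∑ i ∈ s with c i, y i = N * my := by rw [hmy, mul_inv_cancel_left₀ hN0]
  simp only [mul_sub, sub_mul, Finset.sum_sub_distrib, ← Finset.mul_sum, ← Finset.sum_mul, hx, hy,
    Finset.sum_const, nsmul_eq_mul, hN]
  field_simp
  ring

section StrongLaw

variable {p M q : ℕ} {P : Measure Ω} {X : Ω → Fin p → ℝ} {U : Ω → Fin M} {Z : Ω → Fin q}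
  {Xs : ℕ → Ω → Fin p → ℝ} {Us : ℕ → Ω → Fin M} {Zs : ℕ → Ω → Fin q}

lemma IsIIDSample.ae_tendsto_average (hiid : IsIIDSample P X U Z Xs Us Zs)
    {g : (Fin p → ℝ) × Fin M × Fin q → ℝ} (hg : Measurable g)
    (hint : Integrable (fun ω => g (X ω, U ω, Z ω)) P) :
    ∀ᵐ ω ∂P, Tendsto (fun n : ℕ => (∑ i ∈ range n, g (Xs i ω, Us i ω, Zs i ω)) / n) atTop
      (𝓝 (∫ ω, g (X ω, U ω, Z ω) ∂P)) := by
  obtain ⟨-, hindep, hident⟩ := hiid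
  have hid i := (hident i).comp hg
  have h := strong_law_ae_real _ ((hid 0).integrable_iff.2 hint)
    (fun i j hij => (hindep.indepFun hij).comp hg hg) fun i => (hid i).trans (hid 0).symm
  rw [(hid 0).integral_eq] at h
  exact h

lemma IsIIDSample.ae_tendsto_average_ite (hiid : IsIIDSample P X U Z Xs Us Zs)
    (hU : Measurable U) (hZ : Measurable Z) (c : Fin M → Fin q → Prop)
    [∀ m l, Decidable (c m l)] {f : (Fin p → ℝ) → ℝ} (hf : Measurable f)
    (hint : Integrable (fun ω => f (X ω)) P) :
    ∀ᵐ ω ∂P, Tendsto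
      (fun n : ℕ => (∑ i ∈ range n, if c (Us i ω) (Zs i ω) then f (Xs i ω) else 0) / n) atTop
      (𝓝 (∫ ω, (if c (U ω) (Z ω) then f (X ω) else 0) ∂P)) := by
  let s : Set (Fin M × Fin q) := {mz | c mz.1 mz.2}
  have hc : MeasurableSet {ω | c (U ω) (Z ω)} := (hU.prodMk hZ) (.of_discrete (s := s))
  refine hiid.ae_tendsto_average (g := fun t => if c t.2.1 t.2.2 then f t.1 else 0)
    (Measurable.ite (measurable_snd (.of_discrete (s := s))) (hf.comp measurable_fst)
      measurable_const) ?_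
  exact (hint.indicator hc).congr (ae_of_all _ fun ω => by simp [Set.indicator_apply])

lemma integral_ite_one {P : Measure Ω} {c : Ω → Prop} [DecidablePred c]
    (hc : MeasurableSet {ω | c ω}) : ∫ ω, (if c ω then (1 : ℝ) else 0) ∂P = P.real {ω | c ω} := by
  simpa only [Set.indicator_apply, Set.mem_ofPred_eq, Pi.one_apply] using
    integral_indicator_one (μ := P) hc

lemma IsIIDSample.ae_tendsto_NU [IsFiniteMeasure P] (hiid : IsIIDSample P X U Z Xs Us Zs)
    (hU : Measurable U) (hZ : Measurable Z) :
    ∀ᵐ ω ∂P, ∀ m, Tendsto (fun n : ℕ => NU Us m n ω / n) atTop (𝓝 (pU P U m)) :=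
  ae_all_iff.2 fun m => by
    have h := hiid.ae_tendsto_average_ite hU hZ (fun u _ => u = m) (f := fun _ => 1)
      measurable_const (integrable_const 1)
    rw [integral_ite_one (c := fun ω => U ω = m) (hU (measurableSet_singleton m))] at h
    exact h

lemma IsIIDSample.ae_tendsto_NZU [IsFiniteMeasure P] (hiid : IsIIDSample P X U Z Xs Us Zs)
    (hU : Measurable U) (hZ : Measurable Z) :
    ∀ᵐ ω ∂P, ∀ l m, Tendsto (fun n : ℕ => NZU Us Zs l m n ω / n) atTop (𝓝 (pZU P U Z l m)) :=
  ae_all_iff.2 fun l => ae_all_iff.2 fun m => by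
    have h := hiid.ae_tendsto_average_ite hU hZ (fun u z => z = l ∧ u = m) (f := fun _ => 1)
      measurable_const (integrable_const 1)
    rw [integral_ite_one (c := fun ω => Z ω = l ∧ U ω = m)
      ((hZ (measurableSet_singleton l)).inter (hU (measurableSet_singleton m)))] at h
    exact h

end StrongLaw

lemma memLp_two_apply_of_integrable_sum_sq {p : ℕ} {P : Measure Ω} {X : Ω → Fin p → ℝ}
    (hX : Measurable X) (hS : Integrable (fun ω => ∑ i, X ω i ^ 2) P) (j : Fin p) :
    MemLp (fun ω => X ω j) 2 P := by
  refine (memLp_two_iff_integrable_sq (by fun_prop)).2 (hS.mono' (by fun_prop) ?_)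
  refine ae_of_all _ fun ω => ?_
  rw [Real.norm_of_nonneg (sq_nonneg _)]
  exact Finset.single_le_sum (fun i _ => sq_nonneg (X ω i)) (Finset.mem_univ j)

section Consistency

variable {p M q : ℕ} {P : Measure Ω} {X : Ω → Fin p → ℝ} {U : Ω → Fin M} {Z : Ω → Fin q}
  {Xs : ℕ → Ω → Fin p → ℝ} {Us : ℕ → Ω → Fin M} {Zs : ℕ → Ω → Fin q} {m : Fin M} {ω : Ω}

lemma tendsto_muUhat (hp : pU P U m ≠ 0)
    (hN : Tendsto (fun n : ℕ => NU Us m n ω / n) atTop (𝓝 (pU P U m)))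
    (hS : ∀ j, Tendsto (fun n : ℕ => (∑ i ∈ range n, if Us i ω = m then Xs i ω j else 0) / n)
      atTop (𝓝 (∫ ω, (if U ω = m then X ω j else 0) ∂P))) :
    Tendsto (fun n => muUhat Xs Us m n ω) atTop (𝓝 (muU P X U m)) :=
  tendsto_pi_nhds.2 fun j => by
    simpa only [muUhat, muU, inv_mul_eq_div] using tendsto_div_of_tendsto_div_natCast (hS j) hN hp

lemma tendsto_muZUhat {l : Fin q} (hp : pZU P U Z l m ≠ 0)
    (hN : Tendsto (fun n : ℕ => NZU Us Zs l m n ω / n) atTop (𝓝 (pZU P U Z l m)))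
    (hS : ∀ j, Tendsto
      (fun n : ℕ => (∑ i ∈ range n, if Zs i ω = l ∧ Us i ω = m then Xs i ω j else 0) / n)
      atTop (𝓝 (∫ ω, (if Z ω = l ∧ U ω = m then X ω j else 0) ∂P))) :
    Tendsto (fun n => muZUhat Xs Us Zs l m n ω) atTop (𝓝 (muZU P X U Z l m)) :=
  tendsto_pi_nhds.2 fun j => by
    simpa only [muZUhat, muZU, inv_mul_eq_div] using
      tendsto_div_of_tendsto_div_natCast (hS j) hN hp

/-- Centering the empirical covariance at the true mean `μ_m` moves the error into the
product `(μ̂_m - μ_m) ⊗ (μ̂_m - μ_m)`, which vanishes in the limit. -/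
lemma tendsto_VUhat (hp : pU P U m ≠ 0)
    (hN : Tendsto (fun n : ℕ => NU Us m n ω / n) atTop (𝓝 (pU P U m)))
    (hμ : Tendsto (fun n => muUhat Xs Us m n ω) atTop (𝓝 (muU P X U m)))
    (hT : ∀ a b, Tendsto (fun n : ℕ => (∑ i ∈ range n, if Us i ω = m then
        (Xs i ω a - muU P X U m a) * (Xs i ω b - muU P X U m b) else 0) / n) atTop
      (𝓝 (∫ ω, (if U ω = m then (X ω a - muU P X U m a) * (X ω b - muU P X U m b) else 0) ∂P))) :
    Tendsto (fun n => VUhat Xs Us m n ω) atTop (𝓝 (VU P X U m)) := by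
  refine tendsto_pi_nhds.2 fun a => tendsto_pi_nhds.2 fun b => ?_
  have hN0 : ∀ᶠ n : ℕ in atTop, NU Us m n ω ≠ 0 :=
    (hN.eventually_ne hp).mono fun n hn h => hn (by rw [h, zero_div])
  have hshift : Tendsto (fun n => (muUhat Xs Us m n ω a - muU P X U m a) *
      (muUhat Xs Us m n ω b - muU P X U m b)) atTop (𝓝 0) := by
    simpa using ((tendsto_pi_nhds.1 hμ a).sub_const (muU P X U m a)).mul
      ((tendsto_pi_nhds.1 hμ b).sub_const (muU P X U m b))
  have hlim := (tendsto_div_of_tendsto_div_natCast (hT a b) hN hp).sub hshift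
  rw [sub_zero, div_eq_inv_mul] at hlim
  refine hlim.congr' (hN0.mono fun n hn => ?_)
  rw [div_eq_inv_mul]
  exact (inv_mul_sum_ite_sub_mul_sub (range n) (fun i => Us i ω = m) (fun i => Xs i ω a)
    (fun i => Xs i ω b) (muU P X U m a) (muU P X U m b) rfl hn rfl rfl).symm

end Consistency

theorem stmt14_general
    {Ω : Type} [MeasurableSpace Ω] (P : Measure Ω) [IsProbabilityMeasure P]
    (p q M : ℕ)
    (X : Ω → Fin p → ℝ) (U : Ω → Fin M) (Z : Ω → Fin q)
    (hX : Measurable X) (hU : Measurable U) (hZ : Measurable Z)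
    (hmom : Integrable (fun ω => (∑ i, X ω i ^ 2) ^ 2) P)
    (hpU : ∀ m, 0 < pU P U m) (hpZU : ∀ l m, 0 < pZU P U Z l m)
    (hV : ∀ m, (VU P X U m).PosDef)
    (Xs : ℕ → Ω → Fin p → ℝ) (Us : ℕ → Ω → Fin M) (Zs : ℕ → Ω → Fin q)
    (hiid : IsIIDSample P X U Z Xs Us Zs)
    :
    ∀ (K : Finset (Fin p)), K.Nonempty →
      ∀ᵐ ω ∂P,
        Tendsto (fun n => xiKhat Xs Us Zs K n ω) atTop (nhds (xiK P X U Z K)) := by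
  intro K _
  have hL2 := memLp_two_apply_of_integrable_sum_sq hX
    (((memLp_two_iff_integrable_sq (by fun_prop)).2 hmom).integrable one_le_two)
  have avg := hiid.ae_tendsto_average_ite hU hZ
  filter_upwards [hiid.ae_tendsto_NU hU hZ, hiid.ae_tendsto_NZU hU hZ,
    ae_all_iff.2 fun m => ae_all_iff.2 fun j =>
      avg (fun u _ => u = m) (measurable_pi_apply j) ((hL2 j).integrable one_le_two),
    ae_all_iff.2 fun l => ae_all_iff.2 fun m => ae_all_iff.2 fun j =>
      avg (fun u z => z = l ∧ u = m) (measurable_pi_apply j) ((hL2 j).integrable one_le_two),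
    ae_all_iff.2 fun m => ae_all_iff.2 fun a => ae_all_iff.2 fun b =>
      avg (fun u _ => u = m) (f := fun x => (x a - muU P X U m a) * (x b - muU P X U m b))
        (by fun_prop) (((hL2 a).sub (memLp_const _)).integrable_mul ((hL2 b).sub (memLp_const _)))]
    with ω hN hNZ hS hSZ hT
  refine tendsto_finsetSum _ fun m _ => ((hN m).pow 2).mul ?_
  have hp := (hpU m).ne'
  have hμ := tendsto_muUhat hp (hN m) (hS m)
  exact tendsto_xiOfMoments K
    (tendsto_pi_nhds.2 fun l => tendsto_div_of_tendsto_div_natCast (hNZ l m) (hN m) hp)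
    (tendsto_VUhat hp (hN m) hμ (hT m))
    (tendsto_pi_nhds.2 fun l => tendsto_muZUhat (hpZU l m).ne' (hNZ l m) (hSZ l m)) hμ (hV m)

/-- Theorem 1(i): almost sure consistency of `ξ̂_K`. -/
theorem stmt14
    {Ω : Type} [MeasurableSpace Ω] (P : Measure Ω) [IsProbabilityMeasure P]
    (p q M : ℕ) (hp : 1 ≤ p) (hq : 2 ≤ q) (hM : 1 ≤ M)
    (X : Ω → Fin p → ℝ) (U : Ω → Fin M) (Z : Ω → Fin q)
    (hX : Measurable X) (hU : Measurable U) (hZ : Measurable Z)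
    (hmom : Integrable (fun ω => (∑ i, X ω i ^ 2) ^ 2) P)
    (hpU : ∀ m, 0 < pU P U m) (hpZU : ∀ l m, 0 < pZU P U Z l m)
    (hV : ∀ m, (VU P X U m).PosDef)
    (Xs : ℕ → Ω → Fin p → ℝ) (Us : ℕ → Ω → Fin M) (Zs : ℕ → Ω → Fin q)
    (hiid : IsIIDSample P X U Z Xs Us Zs)
    :
    ∀ (K : Finset (Fin p)), K.Nonempty →
      ∀ᵐ ω ∂P,
        Tendsto (fun n => xiKhat Xs Us Zs K n ω) atTop (nhds (xiK P X U Z K)) :=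
  stmt14_general P p q M X U Z hX hU hZ hmom hpU hpZU hV Xs Us Zs hiid

end ArxivStmt
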